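/- Let (G,S) be a Coxeter system with word length function ℓ. For every t > 0, the function φ_t : G → ℂ, φ_t(g) = e^{-t·ℓ(g)}, is positive definite: for any g₁,...,gₙ ∈ G and c₁,...,cₙ ∈ ℂ, Σ_{i,j} cᵢ · conj(cⱼ) · e^{-t·ℓ(gᵢ⁻¹gⱼ)} ≥ 0. -/

import Mathlib

/-!
Let `N(w)` be the set of right inversions of `w`, the reflections `t` with `ℓ (w t) < ℓ w`.
Tits' action of `W` on `W × ZMod 2` (conjugation on the first factor) produces a cocycle
`ν(u v, t) = ν(v, t) + ν(u, v t v⁻¹)` with `N(w) = {t reflection | ν(w, t) = 1}`, hence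
`N(g) ∆ N(h) = h⁻¹ N(g h⁻¹) h` and, since `|N(w)| = ℓ(w)`, `ℓ(g h⁻¹) = |N(g) ∆ N(h)|`.
So `exp (-t ℓ(g⁻¹ h)) = q ^ |A ∆ B|` with `q = exp (-t)` and `A`, `B` finite sets. Inside a finite
universe `R`, `q ^ |A ∆ B| = ∏_{r ∈ R} k(r ∈ A, r ∈ B)`, where `k(a, b) = if a = b then 1 else q`
is the Gram kernel of two unit vectors of `ℝ²`; a product of Gram kernels is the Gram kernel of the
tensor products, and a Gram kernel is positive semidefinite.
-/

open Finset
open scoped symmDiff ComplexOrder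

namespace CoxeterSystem

variable {B W : Type*} [Group W] {M : CoxeterMatrix B} (cs : CoxeterSystem M W)

local prefix:100 "s" => cs.simple
local prefix:100 "π" => cs.wordProd
local prefix:100 "ℓ" => cs.length
local prefix:100 "ris" => cs.rightInvSeq

theorem simple_mul_mul_simple_eq_simple_iff (i : B) (x : W) :
    s i * x * s i = s i ↔ x = s i := by
  refine ⟨fun h => ?_, by rintro rfl; simp⟩
  simpa [mul_assoc] using congrArg (fun y => s i * y * s i) h

variable [DecidableEq W]

def reflectionPerm (i : B) : Equiv.Perm (W × ZMod 2) :=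
  Function.Involutive.toPerm (fun p => (s i * p.1 * s i, p.2 + if p.1 = s i then 1 else 0))
    fun ⟨x, z⟩ => by
      simp only [simple_mul_mul_simple_eq_simple_iff, Prod.mk.injEq, add_assoc]
      exact ⟨by simp [mul_assoc], by split_ifs <;> decide +revert⟩

theorem reflectionPerm_apply (i : B) (x : W) (z : ZMod 2) :
    cs.reflectionPerm i (x, z) = (s i * x * s i, z + if x = s i then 1 else 0) := rfl

theorem reflectionPerm_mul_pow_apply (i i' : B) (m : ℕ) (x : W) (z : ZMod 2) :
    ((cs.reflectionPerm i * cs.reflectionPerm i') ^ m) (x, z) =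
      ((s i * s i') ^ m * x * ((s i * s i') ^ m)⁻¹,
        z + ∑ k ∈ range (2 * m), if x = ((s i * s i') ^ k)⁻¹ * s i' then 1 else 0) := by
  set y := s i * s i'
  have hy : y⁻¹ = s i' * s i := by simp [y]
  induction m generalizing x z with
  | zero => simp
  | succ m ih =>
    have conj_eq : s i * (s i' * x * s i') * s i = y * x * y⁻¹ := by
      simp only [hy, y]; group
    have hcond : s i' * x * s i' = s i ↔ x = (y ^ (0 + 1))⁻¹ * s i' := by
      rw [zero_add, pow_one, hy]
      constructor
      · intro h; simp [← h, mul_assoc]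
      · rintro rfl; simp [mul_assoc]
    have hshift : ∀ k : ℕ, y * x * y⁻¹ = (y ^ k)⁻¹ * s i' ↔ x = (y ^ (k + 1 + 1))⁻¹ * s i' := by
      intro k
      have hsy : s i' * y = y⁻¹ * s i' := by simp [y, hy, mul_assoc]
      have : (y ^ (k + 1 + 1))⁻¹ * s i' = y⁻¹ * ((y ^ k)⁻¹ * s i') * y := by
        rw [mul_assoc, mul_assoc, hsy]; group
      rw [this]
      constructor <;> rintro h
      · rw [← h]; group
      · rw [h]; group
    rw [pow_succ, Equiv.Perm.mul_apply, Equiv.Perm.mul_apply, reflectionPerm_apply,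
      reflectionPerm_apply, ih, conj_eq]
    ext
    · simp only; group
    · simp only [hshift, hcond]
      rw [show 2 * (m + 1) = 2 * m + 1 + 1 by ring, sum_range_succ', sum_range_succ']
      simp only [pow_zero, inv_one, one_mul]
      abel

theorem isLiftable_reflectionPerm : M.IsLiftable cs.reflectionPerm := by
  intro i i'
  -- `(s i * s i') ^ M i i' = 1`, so the `2 * M i i'` indicator terms come in equal pairs.
  ext ⟨x, z⟩ : 1
  have periodic : ∀ k, ((s i * s i') ^ (M i i' + k))⁻¹ = ((s i * s i') ^ k)⁻¹ := by
    simp [pow_add, cs.simple_mul_simple_pow]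
  rw [reflectionPerm_mul_pow_apply, two_mul, sum_range_add]
  simp [periodic, cs.simple_mul_simple_pow, ← two_mul, CharTwo.two_eq_zero]

def reflectionRep : W →* Equiv.Perm (W × ZMod 2) :=
  cs.lift ⟨cs.reflectionPerm, cs.isLiftable_reflectionPerm⟩

theorem reflectionRep_wordProd (ω : List B) (x : W) (z : ZMod 2) :
    cs.reflectionRep (π ω) (x, z) = (π ω * x * (π ω)⁻¹, z + (ris ω).count x) := by
  induction ω generalizing x z with
  | nil => simp
  | cons i ω ih =>
    have hcond : π ω * x * (π ω)⁻¹ = s i ↔ (π ω)⁻¹ * s i * π ω = x := by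
      constructor
      · intro h; rw [← h]; group
      · intro h; rw [← h]; group
    rw [cs.wordProd_cons, map_mul, Equiv.Perm.mul_apply, ih, reflectionRep,
      lift_apply_simple, reflectionPerm_apply, rightInvSeq, List.count_cons]
    ext
    · simp only [mul_inv_rev, inv_simple]; group
    · by_cases h : (π ω)⁻¹ * s i * π ω = x <;> simp [hcond, h, add_assoc]

/-- The parity of the number of occurrences of `t` in the right inversion sequence of any word
for `w`; defining it through `reflectionRep` makes it independent of the word. -/
def invParity (w t : W) : ZMod 2 := (cs.reflectionRep w (t, 0)).2

theorem invParity_wordProd (ω : List B) (t : W) : cs.invParity (π ω) t = (ris ω).count t := by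
  simp [invParity, reflectionRep_wordProd]

theorem reflectionRep_apply (w x : W) (z : ZMod 2) :
    cs.reflectionRep w (x, z) = (w * x * w⁻¹, z + cs.invParity w x) := by
  obtain ⟨ω, rfl⟩ := cs.wordProd_surjective w
  rw [reflectionRep_wordProd, invParity_wordProd]

theorem invParity_mul (u v t : W) :
    cs.invParity (u * v) t = cs.invParity v t + cs.invParity u (v * t * v⁻¹) := by
  rw [invParity, map_mul, Equiv.Perm.mul_apply, reflectionRep_apply, reflectionRep_apply,
    zero_add]

theorem invParity_one (t : W) : cs.invParity 1 t = 0 := by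
  simpa using cs.invParity_wordProd [] t

theorem invParity_inv (w t : W) : cs.invParity w⁻¹ t = cs.invParity w (w⁻¹ * t * w) := by
  have h := cs.invParity_mul w w⁻¹ t
  rw [mul_inv_cancel, invParity_one, inv_inv] at h
  exact (CharTwo.add_eq_zero.mp h.symm)

theorem invParity_simple_self (i : B) : cs.invParity (s i) (s i) = 1 := by
  simpa using cs.invParity_wordProd [i] (s i)

theorem IsReflection.invParity_self {t : W} (ht : cs.IsReflection t) : cs.invParity t t = 1 := by
  obtain ⟨w, i, rfl⟩ := ht
  have hconj : w⁻¹ * (w * s i * w⁻¹) * w = s i := by group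
  rw [invParity_mul, invParity_inv, inv_inv, hconj, invParity_mul, invParity_simple_self]
  simp [add_left_comm _ (1 : ZMod 2), CharTwo.add_self_eq_zero]

theorem invParity_wordProd_eq_one_iff {ω : List B} (hω : cs.IsReduced ω) (t : W) :
    cs.invParity (π ω) t = 1 ↔ t ∈ ris ω := by
  rw [invParity_wordProd]
  by_cases ht : t ∈ ris ω
  · simp [ht, List.count_eq_one_of_mem hω.nodup_rightInvSeq ht]
  · simp [ht, List.count_eq_zero.mpr ht]

theorem length_mul_lt_of_invParity_eq_one {w t : W} (h : cs.invParity w t = 1) :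
    ℓ (w * t) < ℓ w := by
  obtain ⟨ω, hω, rfl⟩ := cs.exists_isReduced w
  exact (cs.isRightInversion_of_mem_rightInvSeq hω ((cs.invParity_wordProd_eq_one_iff hω t).mp h)).2

theorem isRightInversion_iff_invParity_eq_one {w t : W} (ht : cs.IsReflection t) :
    cs.IsRightInversion w t ↔ cs.invParity w t = 1 := by
  refine ⟨fun hwt => ?_, fun h => ⟨ht, cs.length_mul_lt_of_invParity_eq_one h⟩⟩
  by_contra hne
  have h0 : cs.invParity w t = 0 := by
    revert hne; generalize cs.invParity w t = a; decide +revert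
  have h1 : cs.invParity (w * t) t = 1 := by
    rw [invParity_mul, ht.invParity_self, mul_inv_cancel_right, h0, add_zero]
  have := cs.length_mul_lt_of_invParity_eq_one h1
  rw [mul_assoc, ht.mul_self, mul_one] at this
  exact lt_asymm hwt.2 this

noncomputable def rightInvSet (w : W) : Finset W := (ris (cs.exists_isReduced w).choose).toFinset

theorem mem_rightInvSet {w t : W} : t ∈ cs.rightInvSet w ↔ cs.IsRightInversion w t := by
  obtain ⟨hω, hw⟩ := (cs.exists_isReduced w).choose_spec
  rw [rightInvSet, List.mem_toFinset]
  constructor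
  · intro h; rw [hw]; exact cs.isRightInversion_of_mem_rightInvSeq hω h
  · intro h
    rw [← cs.invParity_wordProd_eq_one_iff hω, ← hw]
    exact (cs.isRightInversion_iff_invParity_eq_one h.1).mp h

theorem card_rightInvSet (w : W) : #(cs.rightInvSet w) = ℓ w := by
  obtain ⟨hω, hw⟩ := (cs.exists_isReduced w).choose_spec
  rw [rightInvSet, List.toFinset_card_of_nodup hω.nodup_rightInvSeq, length_rightInvSeq, ← hω.eq,
    ← hw]

theorem rightInvSet_symmDiff (g h : W) :
    cs.rightInvSet g ∆ cs.rightInvSet h =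
      (cs.rightInvSet (g * h⁻¹)).map (MulAut.conj h⁻¹).toEquiv.toEmbedding := by
  ext t
  rw [mem_map_equiv, show (MulAut.conj h⁻¹).toEquiv.symm t = h * t * h⁻¹ by simp, mem_symmDiff,
    mem_rightInvSet, mem_rightInvSet, mem_rightInvSet]
  have hcocycle : cs.invParity g t = cs.invParity h t + cs.invParity (g * h⁻¹) (h * t * h⁻¹) := by
    simpa using cs.invParity_mul (g * h⁻¹) h t
  by_cases ht : cs.IsReflection t
  · simp only [isRightInversion_iff_invParity_eq_one cs ht,
      isRightInversion_iff_invParity_eq_one cs (ht.conj h), hcocycle]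
    generalize cs.invParity h t = a, cs.invParity (g * h⁻¹) (h * t * h⁻¹) = b
    decide +revert
  · have : ¬ cs.IsReflection (h * t * h⁻¹) := by rwa [isReflection_conj_iff]
    simp [IsRightInversion, ht, this]

theorem card_rightInvSet_symmDiff (g h : W) :
    #(cs.rightInvSet g ∆ cs.rightInvSet h) = ℓ (g * h⁻¹) := by
  rw [rightInvSet_symmDiff, card_map, card_rightInvSet]

end CoxeterSystem

section GramKernels

variable {𝕜 : Type*} [RCLike 𝕜]

theorem sum_sum_mul_conj_mul_gram_nonneg {ι κ : Type*} [Fintype ι] [Fintype κ]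
    (Φ : ι → κ → ℝ) (c : ι → 𝕜) :
    0 ≤ ∑ i, ∑ j, c i * starRingEnd 𝕜 (c j) * ((∑ f, Φ i f * Φ j f : ℝ) : 𝕜) := by
  have hsquares : ∑ i, ∑ j, c i * starRingEnd 𝕜 (c j) * ((∑ f, Φ i f * Φ j f : ℝ) : 𝕜) =
      ∑ f, (∑ i, c i * Φ i f) * starRingEnd 𝕜 (∑ i, c i * Φ i f) :=
    calc _ = ∑ i, ∑ j, ∑ f, c i * Φ i f * (starRingEnd 𝕜 (c j) * Φ j f) := by
          simp only [RCLike.ofReal_sum, RCLike.ofReal_mul, mul_sum]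
          exact sum_congr rfl fun i _ => sum_congr rfl fun j _ => sum_congr rfl fun f _ => by ring
      _ = ∑ f, ∑ i, ∑ j, c i * Φ i f * (starRingEnd 𝕜 (c j) * Φ j f) :=
          (sum_congr rfl fun i _ => sum_comm).trans sum_comm
      _ = _ := by simp only [map_sum, map_mul, RCLike.conj_ofReal, sum_mul_sum]
  rw [hsquares]
  exact sum_nonneg fun f _ => mul_star_self_nonneg _

theorem exists_sum_mul_eq_ite {q : ℝ} (hq0 : 0 ≤ q) (hq1 : q ≤ 1) :
    ∃ u : Bool → Fin 2 → ℝ, ∀ a b, ∑ e, u a e * u b e = if a = b then 1 else q := by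
  refine ⟨fun a => if a then ![q, √(1 - q ^ 2)] else ![1, 0], ?_⟩
  have hsqrt : √(1 - q ^ 2) ^ 2 = 1 - q ^ 2 := Real.sq_sqrt (by nlinarith)
  intro a b
  cases a <;> cases b <;> simp [Fin.sum_univ_two, hsqrt, ← sq]

theorem exists_sum_mul_eq_pow_card_symmDiff {α : Type*} [DecidableEq α] (R : Finset α) {q : ℝ}
    (hq0 : 0 ≤ q) (hq1 : q ≤ 1) :
    ∃ Φ : Finset α → (R → Fin 2) → ℝ,
      ∀ A ⊆ R, ∀ B ⊆ R, ∑ f, Φ A f * Φ B f = q ^ #(A ∆ B) := by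
  obtain ⟨u, hu⟩ := exists_sum_mul_eq_ite hq0 hq1
  refine ⟨fun A f => ∏ r, u (decide (r.1 ∈ A)) (f r), fun A hA B hB => ?_⟩
  have hfactor : ∀ r : α, (if decide (r ∈ A) = decide (r ∈ B) then 1 else q) =
      if r ∈ A ∆ B then q else 1 := by
    intro r
    by_cases hrA : r ∈ A <;> by_cases hrB : r ∈ B <;> simp [mem_symmDiff, hrA, hrB]
  calc ∑ f : R → Fin 2, (∏ r, u (decide (r.1 ∈ A)) (f r)) * ∏ r, u (decide (r.1 ∈ B)) (f r)
      = ∏ r : R, ∑ e, u (decide (r.1 ∈ A)) e * u (decide (r.1 ∈ B)) e := by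
        rw [Fintype.prod_sum]
        exact sum_congr rfl fun f _ => prod_mul_distrib.symm
    _ = ∏ r ∈ R, if r ∈ A ∆ B then q else 1 := by
        simp only [hu, hfactor]
        exact prod_coe_sort R fun r => if r ∈ A ∆ B then q else 1
    _ = q ^ #(A ∆ B) := by
        rw [prod_ite_mem, prod_const,
          inter_eq_right.mpr (symmDiff_subset_union.trans (union_subset hA hB))]

theorem sum_sum_mul_conj_mul_pow_card_symmDiff_nonneg {ι α : Type*} [Fintype ι] [DecidableEq α]
    (A : ι → Finset α) {q : ℝ} (hq0 : 0 ≤ q) (hq1 : q ≤ 1) (c : ι → 𝕜) :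
    0 ≤ ∑ i, ∑ j, c i * starRingEnd 𝕜 (c j) * ((q ^ #(A i ∆ A j) : ℝ) : 𝕜) := by
  obtain ⟨Φ, hΦ⟩ := exists_sum_mul_eq_pow_card_symmDiff (univ.biUnion A) hq0 hq1
  have hA : ∀ i, A i ⊆ univ.biUnion A := fun i => subset_biUnion_of_mem A (mem_univ i)
  simpa only [hΦ _ (hA _) _ (hA _)] using sum_sum_mul_conj_mul_gram_nonneg (fun i => Φ (A i)) c

end GramKernels

theorem stmt_5_general {B : Type*} {W : Type*} [Group W]
    {M : CoxeterMatrix B} (cs : CoxeterSystem M W)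
    (t : ℝ) (ht : 0 < t) (n : ℕ) (g : Fin n → W) (c : Fin n → ℂ) :
    0 ≤ (∑ i, ∑ j, c i * (starRingEnd ℂ) (c j) *
          (Real.exp (-t * (cs.length ((g i)⁻¹ * g j))) : ℂ)).re ∧
    (∑ i, ∑ j, c i * (starRingEnd ℂ) (c j) *
          (Real.exp (-t * (cs.length ((g i)⁻¹ * g j))) : ℂ)).im = 0 := by
  classical
  have hexp : ∀ i j, Real.exp (-t * (cs.length ((g i)⁻¹ * g j))) =
      Real.exp (-t) ^ #(cs.rightInvSet (g i)⁻¹ ∆ cs.rightInvSet (g j)⁻¹) := by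
    intro i j
    rw [cs.card_rightInvSet_symmDiff, inv_inv, ← Real.exp_nat_mul, mul_comm]
  have hq1 : Real.exp (-t) ≤ 1 := Real.exp_le_one_iff.mpr (neg_nonpos.mpr ht.le)
  simp only [hexp]
  exact (Complex.nonneg_iff.mp (sum_sum_mul_conj_mul_pow_card_symmDiff_nonneg
    (fun i => cs.rightInvSet (g i)⁻¹) (Real.exp_pos _).le hq1 c)).imp_right Eq.symm

/-- For a Coxeter system with word length `ℓ` and `t > 0`, the function
`g ↦ exp (-t ℓ(g))` is positive definite. -/
theorem stmt_5 {B : Type*} [Finite B] {W : Type*} [Group W]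
    {M : CoxeterMatrix B} (cs : CoxeterSystem M W)
    (t : ℝ) (ht : 0 < t) (n : ℕ) (g : Fin n → W) (c : Fin n → ℂ) :
    0 ≤ (∑ i, ∑ j, c i * (starRingEnd ℂ) (c j) *
          (Real.exp (-t * (cs.length ((g i)⁻¹ * g j))) : ℂ)).re ∧
    (∑ i, ∑ j, c i * (starRingEnd ℂ) (c j) *
          (Real.exp (-t * (cs.length ((g i)⁻¹ * g j))) : ℂ)).im = 0 :=
  stmt_5_general cs t ht n g c
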